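/- Fix 0 < a ≤ b. There exists a constant C > 0, depending only on m, d, L, μ, W̃, c, a, b, with the following property. Let (X*, Y*) be a fixed point of the uniform-stepsize primal–dual update (X* = 1(x*)ᵀ for a minimizer x*, Y* = −∇F(X*) ∈ range(I − W)). Let (X, Y) with Y ∈ range(I − W); let Θ = diag(θ₁,…,θ_m) and Π = diag(π₁,…,π_m) with all entries in [a, b]; put θ_min, θ_max, π_min, π_max for the min/max entries, X^{1/2} = WX, Y^{1/2} = W(Y + ∇F(X^{1/2})). Define the separate-stepsize step X_π = X^{1/2} − Θ Y^{1/2}, Y_π = Y^{1/2} + (I − W)Π^{-1}X − ∇F(X^{1/2}), and the uniform step X_gb = X^{1/2} − θ_min Y^{1/2}, Y_gb = Y^{1/2} + θ_min^{-1}(I − W)X − ∇F(X^{1/2}). Then, with R := ‖X − X*‖_F + ‖Y − Y*‖_F, the discrepancy Δ := ‖X_gb − X_π‖_F + ‖Y_gb − Y_π‖_F satisfies Δ ≤ C·[ ( |θ_min − π_min| + (θ_max − θ_min) )·R + (π_max − π_min)·max(‖X*‖_F, R) ]. -/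

import Mathlib

open Matrix Finset
open scoped RealInnerProductSpace

noncomputable section

/-- `ℝ^d` with the Euclidean inner product. -/
abbrev Vec (d : ℕ) := EuclideanSpace ℝ (Fin d)

/-- The `i`-th row of a matrix, viewed as a vector of `ℝ^d`. -/
def mrow {m d : ℕ} (X : Matrix (Fin m) (Fin d) ℝ) (i : Fin m) : Vec d := WithLp.toLp 2 (fun j => X i j)

/-- `∇F(X) = [∇f₁(x₁), …, ∇f_m(x_m)]ᵀ`. -/
def matGrad {m d : ℕ} (f : Fin m → Vec d → ℝ) (X : Matrix (Fin m) (Fin d) ℝ) :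
    Matrix (Fin m) (Fin d) ℝ := fun i j => gradient (f i) (mrow X i) j

/-- Trace inner product `⟨A, B⟩ = tr(AᵀB)`. -/
def minner {m d : ℕ} (A B : Matrix (Fin m) (Fin d) ℝ) : ℝ := Matrix.trace (Aᵀ * B)

/-- Squared Frobenius norm. -/
def fro2 {m d : ℕ} (A : Matrix (Fin m) (Fin d) ℝ) : ℝ := ∑ i, ∑ j, (A i j)^2

/-- Frobenius norm. -/
def fro {m d : ℕ} (A : Matrix (Fin m) (Fin d) ℝ) : ℝ := Real.sqrt (fro2 A)

/-- A gossip matrix for the graph `G`: symmetric, rows summing to one (doubly stochastic),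
positive diagonal, positive on edges, vanishing off edges. -/
structure IsGossip {m : ℕ} (G : SimpleGraph (Fin m)) (Wt : Matrix (Fin m) (Fin m) ℝ) : Prop where
  symm : Wt.IsSymm
  row_sum : ∀ i, ∑ j, Wt i j = 1
  diag_pos : ∀ i, 0 < Wt i i
  adj_pos : ∀ i j, G.Adj i j → 0 < Wt i j
  not_adj : ∀ i j, i ≠ j → ¬G.Adj i j → Wt i j = 0

attribute [local instance] Matrix.frobeniusNormedAddCommGroup Matrix.frobeniusNormedSpace

lemma fro_eq_norm {m d : ℕ} (A : Matrix (Fin m) (Fin d) ℝ) : fro A = ‖A‖ := by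
  rw [Matrix.frobenius_norm_def, fro, fro2, Real.sqrt_eq_rpow]
  congr 1
  refine Finset.sum_congr rfl fun i _ => Finset.sum_congr rfl fun j _ => ?_
  rw [Real.rpow_two, Real.norm_eq_abs, sq_abs]

lemma fro_nonneg {m d : ℕ} (A : Matrix (Fin m) (Fin d) ℝ) : 0 ≤ fro A := Real.sqrt_nonneg _

lemma fro_add_le {m d : ℕ} (A B : Matrix (Fin m) (Fin d) ℝ) : fro (A + B) ≤ fro A + fro B := by
  simp only [fro_eq_norm]; exact norm_add_le _ _

lemma fro_smul {m d : ℕ} (s : ℝ) (A : Matrix (Fin m) (Fin d) ℝ) : fro (s • A) = |s| * fro A := by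
  simp only [fro_eq_norm]; rw [norm_smul, Real.norm_eq_abs]

lemma fro_mul_le {m d : ℕ} (A : Matrix (Fin m) (Fin m) ℝ) (B : Matrix (Fin m) (Fin d) ℝ) :
    fro (A * B) ≤ fro A * fro B := by
  simp only [fro_eq_norm]; exact Matrix.frobenius_norm_mul A B

lemma fro_diag_mul_le {m d : ℕ} (v : Fin m → ℝ) (A : Matrix (Fin m) (Fin d) ℝ) (s : ℝ)
    (hs0 : 0 ≤ s) (hs : ∀ i, |v i| ≤ s) :
    fro (Matrix.diagonal v * A) ≤ s * fro A := by
  have key : fro2 (Matrix.diagonal v * A) ≤ s^2 * fro2 A := by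
    rw [fro2, fro2, Finset.mul_sum]
    refine Finset.sum_le_sum fun i _ => ?_
    rw [Finset.mul_sum]
    refine Finset.sum_le_sum fun j _ => ?_
    rw [Matrix.diagonal_mul, mul_pow]
    have : (v i)^2 ≤ s^2 := by
      rw [← sq_abs (v i)]
      exact pow_le_pow_left₀ (abs_nonneg _) (hs i) 2
    nlinarith [sq_nonneg (A i j)]
  calc fro (Matrix.diagonal v * A) ≤ Real.sqrt (s^2 * fro2 A) := Real.sqrt_le_sqrt key
    _ = s * fro A := by rw [Real.sqrt_mul (sq_nonneg s), Real.sqrt_sq hs0, fro]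

lemma sum_sq_eq_norm_sq {d : ℕ} (x : Vec d) : ∑ j, (x j)^2 = ‖x‖^2 := by
  rw [EuclideanSpace.norm_eq, Real.sq_sqrt (by positivity)]
  refine Finset.sum_congr rfl fun j _ => ?_
  rw [Real.norm_eq_abs, sq_abs]

lemma fro_matGrad_sub_le {m d : ℕ} (f : Fin m → Vec d → ℝ) (L : ℝ) (hL : 0 ≤ L)
    (hlip : ∀ i, ∀ x y : Vec d, ‖gradient (f i) x - gradient (f i) y‖ ≤ L * ‖x - y‖)
    (A B : Matrix (Fin m) (Fin d) ℝ) :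
    fro (matGrad f A - matGrad f B) ≤ L * fro (A - B) := by
  have key : fro2 (matGrad f A - matGrad f B) ≤ L^2 * fro2 (A - B) := by
    rw [fro2, fro2, Finset.mul_sum]
    refine Finset.sum_le_sum fun i _ => ?_
    have h1 : ∑ j, ((matGrad f A - matGrad f B) i j)^2
        = ‖gradient (f i) (mrow A i) - gradient (f i) (mrow B i)‖^2 := by
      rw [← sum_sq_eq_norm_sq]
      exact Finset.sum_congr rfl fun j _ => rfl
    have h2 : ∑ j, ((A - B) i j)^2 = ‖mrow A i - mrow B i‖^2 := by
      rw [← sum_sq_eq_norm_sq]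
      exact Finset.sum_congr rfl fun j _ => by simp [mrow]
    rw [h1, h2]
    have := hlip i (mrow A i) (mrow B i)
    nlinarith [norm_nonneg (gradient (f i) (mrow A i) - gradient (f i) (mrow B i)),
      norm_nonneg (mrow A i - mrow B i)]
  calc fro (matGrad f A - matGrad f B) ≤ Real.sqrt (L^2 * fro2 (A - B)) := Real.sqrt_le_sqrt key
    _ = L * fro (A - B) := by rw [Real.sqrt_mul (sq_nonneg L), Real.sqrt_sq hL, fro]

set_option maxHeartbeats 2000000 in
/-- Lemma 2: one-step comparison between the separate primal/dual-stepsize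
update `(X_π, Y_π)` and the uniform-stepsize update `(X_gb, Y_gb)`: there is a constant
`C > 0` depending only on `m, d, L, μ, W̃, c, a, b` such that
`Δ ≤ C[(|θ_min − π_min| + (θ_max − θ_min))R + (π_max − π_min) max(‖X*‖, R)]`. -/
theorem one_step_discrepancy_separate_stepsizes {m d : ℕ} (hm : 2 ≤ m)
    (G : SimpleGraph (Fin m)) (hG : G.Connected)
    (Wt : Matrix (Fin m) (Fin m) ℝ) (hWt : IsGossip G Wt)
    (c : ℝ) (hc : c ∈ Set.Ioc (0 : ℝ) (1/2))
    (W : Matrix (Fin m) (Fin m) ℝ)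
    (hW : W = (1 - c) • (1 : Matrix (Fin m) (Fin m) ℝ) + c • Wt)
    (L μ : ℝ) (hL : 0 < L) (hμ : 0 ≤ μ)
    (a b : ℝ) (ha : 0 < a) (hab : a ≤ b) :
    ∃ C : ℝ, 0 < C ∧
      ∀ (f : Fin m → Vec d → ℝ),
        (∀ i, Differentiable ℝ (f i)) →
        (∀ i, ∀ x y : Vec d, ‖gradient (f i) x - gradient (f i) y‖ ≤ L * ‖x - y‖) →
        (∀ i, ConvexOn ℝ Set.univ (fun x : Vec d => f i x - μ / 2 * ‖x‖ ^ 2)) →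
      ∀ (xs : Vec d), (∀ x : Vec d, (1/m : ℝ) * ∑ i, f i xs ≤ (1/m : ℝ) * ∑ i, f i x) →
      ∀ (Xs Ys : Matrix (Fin m) (Fin d) ℝ),
        Xs = (fun _ j => xs j) → Ys = - matGrad f Xs →
        (∃ Z, Ys = ((1 : Matrix (Fin m) (Fin m) ℝ) - W) * Z) →
      ∀ (X Y : Matrix (Fin m) (Fin d) ℝ),
        (∃ Z, Y = ((1 : Matrix (Fin m) (Fin m) ℝ) - W) * Z) →
      ∀ (θ πv : Fin m → ℝ), (∀ i, θ i ∈ Set.Icc a b) → (∀ i, πv i ∈ Set.Icc a b) →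
      ∀ (θmin θmax πmin πmax : ℝ),
        ((∀ i, θmin ≤ θ i) ∧ ∃ i, θ i = θmin) →
        ((∀ i, θ i ≤ θmax) ∧ ∃ i, θ i = θmax) →
        ((∀ i, πmin ≤ πv i) ∧ ∃ i, πv i = πmin) →
        ((∀ i, πv i ≤ πmax) ∧ ∃ i, πv i = πmax) →
      ∀ (Xh Yh Xpi Ypi Xgb Ygb : Matrix (Fin m) (Fin d) ℝ),
        Xh = W * X →
        Yh = W * (Y + matGrad f Xh) →
        Xpi = Xh - Matrix.diagonal θ * Yh →
        Ypi = Yh + ((1 : Matrix (Fin m) (Fin m) ℝ) - W) *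
          Matrix.diagonal (fun i => (πv i)⁻¹) * X - matGrad f Xh →
        Xgb = Xh - θmin • Yh →
        Ygb = Yh + θmin⁻¹ • (((1 : Matrix (Fin m) (Fin m) ℝ) - W) * X) - matGrad f Xh →
        fro (Xgb - Xpi) + fro (Ygb - Ypi) ≤
          C * ((|θmin - πmin| + (θmax - θmin)) * (fro (X - Xs) + fro (Y - Ys)) +
            (πmax - πmin) * max (fro Xs) (fro (X - Xs) + fro (Y - Ys))) := by
  classical
  set KW : ℝ := fro W with hKWdef
  set K1 : ℝ := fro ((1 : Matrix (Fin m) (Fin m) ℝ) - W) with hK1def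
  have hKW0 : 0 ≤ KW := fro_nonneg _
  have hK10 : 0 ≤ K1 := fro_nonneg _
  set C1 : ℝ := KW * (1 + L * KW) with hC1def
  set C2 : ℝ := K1 / a ^ 2 with hC2def
  set C3 : ℝ := 2 * K1 / a ^ 2 with hC3def
  have hC10 : 0 ≤ C1 := by positivity
  have hC20 : 0 ≤ C2 := by positivity
  have hC30 : 0 ≤ C3 := by positivity
  refine ⟨C1 + C2 + C3 + 1, by linarith, ?_⟩
  intro f hdiff hlip hconv xs hxs Xs Ys hXs hYs hYsr X Y hYr θ πv hθab hπab
    θmin θmax πmin πmax hθmin hθmax hπmin hπmax Xh Yh Xpi Ypi Xgb Ygb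
    hXh hYh hXpi hYpi hXgb hYgb
  set R : ℝ := fro (X - Xs) + fro (Y - Ys) with hRdef
  have hR0 : 0 ≤ R := add_nonneg (fro_nonneg _) (fro_nonneg _)
  set M : ℝ := max (fro Xs) R with hMdef
  have hM0 : 0 ≤ M := le_trans (fro_nonneg Xs) (le_max_left _ _)
  -- basic stepsize facts
  obtain ⟨iθ, hiθ⟩ := hθmin.2
  obtain ⟨iπ, hiπ⟩ := hπmin.2
  obtain ⟨jθ, hjθ⟩ := hθmax.2
  obtain ⟨jπ, hjπ⟩ := hπmax.2
  have haθ : a ≤ θmin := hiθ ▸ (hθab iθ).1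
  have haπ : a ≤ πmin := hiπ ▸ (hπab iπ).1
  have hθminpos : 0 < θmin := lt_of_lt_of_le ha haθ
  have hπminpos : 0 < πmin := lt_of_lt_of_le ha haπ
  have hθd : 0 ≤ θmax - θmin := by have := hθmin.1 jθ; linarith [hjθ ▸ this]
  have hπd : 0 ≤ πmax - πmin := by have := hπmin.1 jπ; linarith [hjπ ▸ this]
  -- row sums of W
  have hrow : ∀ i, ∑ j, W i j = 1 := by
    intro i
    rw [hW]
    simp only [Matrix.add_apply, Matrix.smul_apply, smul_eq_mul, Finset.sum_add_distrib,
      ← Finset.mul_sum, hWt.row_sum i]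
    have : ∑ j, (1 : Matrix (Fin m) (Fin m) ℝ) i j = 1 := by
      simp [Matrix.one_apply]
    rw [this]; ring
  have hWXs : W * Xs = Xs := by
    subst hXs
    ext i j
    show ∑ k, W i k * xs j = xs j
    rw [← Finset.sum_mul, hrow i, one_mul]
  -- fixed point relation
  have hfixG : matGrad f (W * Xs) = -Ys := by rw [hWXs, hYs, neg_neg]
  -- Yh bound
  have hYh2 : Yh = W * ((Y - Ys) + (matGrad f (W * X) - matGrad f (W * Xs))) := by
    rw [hYh, hXh, hfixG]
    congr 1
    abel
  have hYhb : fro Yh ≤ C1 * R := by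
    have h1 : fro ((Y - Ys) + (matGrad f (W * X) - matGrad f (W * Xs)))
        ≤ fro (Y - Ys) + L * (KW * fro (X - Xs)) := by
      refine le_trans (fro_add_le _ _) ?_
      have h2 : fro (matGrad f (W * X) - matGrad f (W * Xs)) ≤ L * fro (W * X - W * Xs) :=
        fro_matGrad_sub_le f L (le_of_lt hL) hlip _ _
      have h3 : fro (W * X - W * Xs) ≤ KW * fro (X - Xs) := by
        rw [← Matrix.mul_sub]; exact fro_mul_le _ _
      have h4 : L * fro (W * X - W * Xs) ≤ L * (KW * fro (X - Xs)) :=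
        mul_le_mul_of_nonneg_left h3 (le_of_lt hL)
      linarith
    have h5 : fro Yh ≤ KW * fro ((Y - Ys) + (matGrad f (W * X) - matGrad f (W * Xs))) := by
      rw [hYh2]; exact fro_mul_le _ _
    have hXR : fro (X - Xs) ≤ R := le_add_of_nonneg_right (fro_nonneg _)
    have hYR : fro (Y - Ys) ≤ R := le_add_of_nonneg_left (fro_nonneg _)
    have h6 : fro (Y - Ys) + L * (KW * fro (X - Xs)) ≤ R + L * (KW * R) := by
      have := mul_le_mul_of_nonneg_left (mul_le_mul_of_nonneg_left hXR hKW0) (le_of_lt hL)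
      linarith
    calc fro Yh ≤ KW * fro ((Y - Ys) + (matGrad f (W * X) - matGrad f (W * Xs))) := h5
      _ ≤ KW * (R + L * (KW * R)) :=
          mul_le_mul_of_nonneg_left (le_trans h1 h6) hKW0
      _ = C1 * R := by rw [hC1def]; ring
  -- primal discrepancy
  have hXdiff : Xgb - Xpi = Matrix.diagonal (fun i => θ i - θmin) * Yh := by
    rw [hXgb, hXpi]
    ext i j
    simp only [Matrix.sub_apply, Matrix.smul_apply, Matrix.diagonal_mul, smul_eq_mul]
    ring
  have hbX : fro (Xgb - Xpi) ≤ (θmax - θmin) * (C1 * R) := by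
    have h1 : fro (Xgb - Xpi) ≤ (θmax - θmin) * fro Yh := by
      rw [hXdiff]
      refine fro_diag_mul_le _ _ _ hθd fun i => ?_
      rw [abs_of_nonneg (by linarith [hθmin.1 i])]
      linarith [hθmax.1 i]
    refine le_trans h1 (mul_le_mul_of_nonneg_left hYhb hθd)
  -- dual discrepancy
  set D2 : Matrix (Fin m) (Fin m) ℝ := Matrix.diagonal (fun i => πmin⁻¹ - (πv i)⁻¹) with hD2def
  have hIWXs : ((1 : Matrix (Fin m) (Fin m) ℝ) - W) * Xs = 0 := by
    rw [Matrix.sub_mul, Matrix.one_mul, hWXs, sub_self]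
  have hIWX : ((1 : Matrix (Fin m) (Fin m) ℝ) - W) * X
      = ((1 : Matrix (Fin m) (Fin m) ℝ) - W) * (X - Xs) := by
    rw [Matrix.mul_sub, hIWXs, sub_zero]
  have hsplit : Matrix.diagonal (fun i => (πv i)⁻¹) * X = πmin⁻¹ • X - D2 * X := by
    ext i j
    simp only [Matrix.sub_apply, Matrix.smul_apply, Matrix.diagonal_mul, smul_eq_mul, hD2def]
    ring
  have hassoc : ((1 : Matrix (Fin m) (Fin m) ℝ) - W) * Matrix.diagonal (fun i => (πv i)⁻¹) * X
      = πmin⁻¹ • (((1 : Matrix (Fin m) (Fin m) ℝ) - W) * X)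
        - ((1 : Matrix (Fin m) (Fin m) ℝ) - W) * (D2 * X) := by
    rw [Matrix.mul_assoc, hsplit, Matrix.mul_sub, Matrix.mul_smul]
  have hYdiff : Ygb - Ypi = (θmin⁻¹ - πmin⁻¹) • (((1 : Matrix (Fin m) (Fin m) ℝ) - W) * X)
      + ((1 : Matrix (Fin m) (Fin m) ℝ) - W) * (D2 * X) := by
    rw [hYgb, hYpi, hassoc]
    module
  -- inverse bounds
  have hinv1 : |θmin⁻¹ - πmin⁻¹| ≤ |θmin - πmin| / a ^ 2 := by
    rw [inv_sub_inv (ne_of_gt hθminpos) (ne_of_gt hπminpos), abs_div, abs_sub_comm,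
      abs_of_pos (mul_pos hθminpos hπminpos)]
    have h1 : a ^ 2 ≤ θmin * πmin := by
      rw [pow_two]; exact mul_le_mul haθ haπ ha.le hθminpos.le
    exact div_le_div_of_nonneg_left (abs_nonneg _) (by positivity) h1
  have hinv2 : ∀ i, |πmin⁻¹ - (πv i)⁻¹| ≤ (πmax - πmin) / a ^ 2 := by
    intro i
    have hπi : 0 < πv i := lt_of_lt_of_le ha (hπab i).1
    rw [inv_sub_inv (ne_of_gt hπminpos) (ne_of_gt hπi), abs_div,
      abs_of_nonneg (by linarith [hπmin.1 i] : (0:ℝ) ≤ πv i - πmin),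
      abs_of_pos (mul_pos hπminpos hπi)]
    have h1 : a ^ 2 ≤ πmin * πv i := by
      rw [pow_two]; exact mul_le_mul haπ (hπab i).1 ha.le hπminpos.le
    have h2 : πv i - πmin ≤ πmax - πmin := by linarith [hπmax.1 i]
    exact div_le_div₀ (by linarith) h2 (by positivity) h1
  -- fro X bound
  have hfroX : fro X ≤ 2 * M := by
    have h1 : X = Xs + (X - Xs) := by abel
    have h2 : fro X ≤ fro Xs + fro (X - Xs) := by
      nth_rewrite 1 [h1]; exact fro_add_le _ _
    have h3 : fro Xs ≤ M := le_max_left _ _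
    have h4 : fro (X - Xs) ≤ M := le_trans (le_add_of_nonneg_right (fro_nonneg _)) (le_max_right _ _)
    linarith
  have hbY : fro (Ygb - Ypi) ≤ C2 * (|θmin - πmin| * R) + C3 * ((πmax - πmin) * M) := by
    have hT1 : fro ((θmin⁻¹ - πmin⁻¹) • (((1 : Matrix (Fin m) (Fin m) ℝ) - W) * X))
        ≤ (|θmin - πmin| / a ^ 2) * (K1 * R) := by
      rw [fro_smul]
      have h1 : fro (((1 : Matrix (Fin m) (Fin m) ℝ) - W) * X) ≤ K1 * R := by
        rw [hIWX]
        refine le_trans (fro_mul_le _ _) ?_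
        exact mul_le_mul_of_nonneg_left (le_add_of_nonneg_right (fro_nonneg _)) hK10
      exact mul_le_mul hinv1 h1 (fro_nonneg _) (by positivity)
    have hT2 : fro (((1 : Matrix (Fin m) (Fin m) ℝ) - W) * (D2 * X))
        ≤ K1 * (((πmax - πmin) / a ^ 2) * (2 * M)) := by
      refine le_trans (fro_mul_le _ _) ?_
      refine mul_le_mul_of_nonneg_left ?_ hK10
      have h1 : fro (D2 * X) ≤ ((πmax - πmin) / a ^ 2) * fro X := by
        rw [hD2def]
        exact fro_diag_mul_le _ _ _ (by positivity) hinv2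
      refine le_trans h1 (mul_le_mul_of_nonneg_left hfroX (by positivity))
    have h0 : fro (Ygb - Ypi) ≤ (|θmin - πmin| / a ^ 2) * (K1 * R)
        + K1 * (((πmax - πmin) / a ^ 2) * (2 * M)) := by
      rw [hYdiff]
      exact le_trans (fro_add_le _ _) (add_le_add hT1 hT2)
    have e1 : (|θmin - πmin| / a ^ 2) * (K1 * R) = C2 * (|θmin - πmin| * R) := by
      rw [hC2def]; field_simp
    have e2 : K1 * (((πmax - πmin) / a ^ 2) * (2 * M)) = C3 * ((πmax - πmin) * M) := by
      rw [hC3def]; field_simp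
    rw [e1, e2] at h0
    exact h0
  -- final assembly
  set Cf : ℝ := C1 + C2 + C3 + 1 with hCfdef
  have habs0 : 0 ≤ |θmin - πmin| := abs_nonneg _
  have p1 : 0 ≤ (θmax - θmin) * R := mul_nonneg hθd hR0
  have p2 : 0 ≤ |θmin - πmin| * R := mul_nonneg habs0 hR0
  have p3 : 0 ≤ (πmax - πmin) * M := mul_nonneg hπd hM0
  have q1 : (θmax - θmin) * (C1 * R) ≤ Cf * ((θmax - θmin) * R) := by
    have : (θmax - θmin) * (C1 * R) = C1 * ((θmax - θmin) * R) := by ring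
    rw [this]
    exact mul_le_mul_of_nonneg_right (by rw [hCfdef]; linarith) p1
  have q2 : C2 * (|θmin - πmin| * R) ≤ Cf * (|θmin - πmin| * R) :=
    mul_le_mul_of_nonneg_right (by rw [hCfdef]; linarith) p2
  have q3 : C3 * ((πmax - πmin) * M) ≤ Cf * ((πmax - πmin) * M) :=
    mul_le_mul_of_nonneg_right (by rw [hCfdef]; linarith) p3
  have final : fro (Xgb - Xpi) + fro (Ygb - Ypi)
      ≤ Cf * ((|θmin - πmin| + (θmax - θmin)) * R + (πmax - πmin) * M) := by
    have : Cf * ((|θmin - πmin| + (θmax - θmin)) * R + (πmax - πmin) * M)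
        = Cf * ((θmax - θmin) * R) + Cf * (|θmin - πmin| * R) + Cf * ((πmax - πmin) * M) := by
      ring
    rw [this]
    linarith
  exact final
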